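/- Let V be a real vector space of finite dimension 4 and let e₁, e₂, e₃ ∈ V be linearly independent. The linear map ⋀²V × ⋀²V × ⋀²V → ⋀³V × ⋀³V × ⋀³V defined by (X₁, X₂, X₃) ↦ (e₁∧X₂ − e₂∧X₁, e₁∧X₃ − e₃∧X₁, e₂∧X₃ − e₃∧X₂) is surjective. (This is the pointwise statement that the boundary map W_{∂}^{(1,2)} is surjective.) -/

import Mathlib

/-! Extend `e₁, e₂, e₃` by a vector `e₀` to a basis of `V`. Every basis vector of `⋀³V`
involves at least two of `e₁, e₂, e₃`, so `⋀³V` is spanned by the products `eₐ ∧ e_b ∧ w`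
(`1 ≤ a < b ≤ 3`, `w ∈ V`), and it suffices to reach each of them in each component
separately. Inputs with a single nonzero entry, such as `(0, e₃ ∧ w, 0) ↦ (e₁ ∧ e₃ ∧ w, 0, 0)`
(as `e₃ ∧ e₃ = 0`), produce in each component the products for two of the three pairs; the
third comes from the diagonal inputs `(c₁ e₁ ∧ w, c₂ e₂ ∧ w, c₃ e₃ ∧ w)`, whose image is
`((c₁ + c₂) e₁₂w, (c₁ + c₃) e₁₃w, (c₂ + c₃) e₂₃w)` by anticommutativity. -/

open ExteriorAlgebra

variable {V : Type*} [AddCommGroup V] [Module ℝ V]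

/-- The pointwise boundary map `W_{∂}^{(1,2)} : (⋀²V)³ → (⋀³V)³`,
`(X₁,X₂,X₃) ↦ (e₁∧X₂ − e₂∧X₁, e₁∧X₃ − e₃∧X₁, e₂∧X₃ − e₃∧X₂)`
(valued in the exterior algebra). -/
noncomputable def Wb12 (e₁ e₂ e₃ : V) :
    (⋀[ℝ]^2 V) × (⋀[ℝ]^2 V) × (⋀[ℝ]^2 V) →ₗ[ℝ]
      ExteriorAlgebra ℝ V × ExteriorAlgebra ℝ V × ExteriorAlgebra ℝ V :=
  let p₁ : (⋀[ℝ]^2 V) × (⋀[ℝ]^2 V) × (⋀[ℝ]^2 V) →ₗ[ℝ] ExteriorAlgebra ℝ V :=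
    (⋀[ℝ]^2 V).subtype.comp (LinearMap.fst ℝ (⋀[ℝ]^2 V) ((⋀[ℝ]^2 V) × (⋀[ℝ]^2 V)))
  let p₂ : (⋀[ℝ]^2 V) × (⋀[ℝ]^2 V) × (⋀[ℝ]^2 V) →ₗ[ℝ] ExteriorAlgebra ℝ V :=
    (⋀[ℝ]^2 V).subtype.comp ((LinearMap.fst ℝ (⋀[ℝ]^2 V) (⋀[ℝ]^2 V)).comp
      (LinearMap.snd ℝ (⋀[ℝ]^2 V) ((⋀[ℝ]^2 V) × (⋀[ℝ]^2 V))))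
  let p₃ : (⋀[ℝ]^2 V) × (⋀[ℝ]^2 V) × (⋀[ℝ]^2 V) →ₗ[ℝ] ExteriorAlgebra ℝ V :=
    (⋀[ℝ]^2 V).subtype.comp ((LinearMap.snd ℝ (⋀[ℝ]^2 V) (⋀[ℝ]^2 V)).comp
      (LinearMap.snd ℝ (⋀[ℝ]^2 V) ((⋀[ℝ]^2 V) × (⋀[ℝ]^2 V))))
  ((LinearMap.mulLeft ℝ (ι ℝ e₁)).comp p₂ - (LinearMap.mulLeft ℝ (ι ℝ e₂)).comp p₁).prod
    (((LinearMap.mulLeft ℝ (ι ℝ e₁)).comp p₃ - (LinearMap.mulLeft ℝ (ι ℝ e₃)).comp p₁).prod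
      ((LinearMap.mulLeft ℝ (ι ℝ e₂)).comp p₃ - (LinearMap.mulLeft ℝ (ι ℝ e₃)).comp p₂))

section ExteriorAlgebra

variable {R M : Type*} [CommRing R] [AddCommGroup M] [Module R M]

theorem ι_mul_ι_anticomm (x y : M) : ι R x * ι R y = -(ι R y * ι R x) :=
  eq_neg_of_add_eq_zero_left (ι_add_mul_swap x y)

theorem ι_commute_ι_mul_ι (x y z : M) : Commute (ι R x) (ι R y * ι R z) := by
  rw [Commute, SemiconjBy, ← mul_assoc, ι_mul_ι_anticomm x y, neg_mul, mul_assoc,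
    ι_mul_ι_anticomm x z, mul_neg, neg_neg, mul_assoc]

theorem ι_mem_exteriorPower_one (x : M) : ι R x ∈ ⋀[R]^1 M := by
  rw [exteriorPower, pow_one]
  exact LinearMap.mem_range_self _ _

theorem ι_mul_mem_exteriorPower (x : M) {n : ℕ} {y : ExteriorAlgebra R M}
    (hy : y ∈ ⋀[R]^n M) : ι R x * y ∈ ⋀[R]^(n + 1) M := by
  rw [exteriorPower, pow_succ']
  exact Submodule.mul_mem_mul (LinearMap.mem_range_self _ x) hy

theorem ι_mul_ι_mem_exteriorPower_two (x y : M) : ι R x * ι R y ∈ ⋀[R]^2 M :=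
  ι_mul_mem_exteriorPower x (ι_mem_exteriorPower_one y)

theorem exteriorPower_three_le_of_forall_mem {e₀ e₁ e₂ e₃ : M}
    (he : Submodule.span R (Set.range ![e₀, e₁, e₂, e₃]) = ⊤)
    {S : Submodule R (ExteriorAlgebra R M)}
    (h₁₂ : ∀ w, ι R e₁ * ι R e₂ * ι R w ∈ S) (h₁₃ : ∀ w, ι R e₁ * ι R e₃ * ι R w ∈ S)
    (h₂₃ : ∀ w, ι R e₂ * ι R e₃ * ι R w ∈ S) : ⋀[R]^3 M ≤ S := by
  rw [← exteriorPower.ιMulti_family_span_fixedDegree_of_span R he, Submodule.span_le]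
  rintro _ ⟨s, rfl⟩
  have hsorted : ∀ a b c : Fin 4, a < b → b < c →
      a = 0 ∧ b = 1 ∧ c = 2 ∨ a = 0 ∧ b = 1 ∧ c = 3 ∨ a = 0 ∧ b = 2 ∧ c = 3 ∨
        a = 1 ∧ b = 2 ∧ c = 3 := by
    decide
  set g := Set.powersetCard.ofFinEmbEquiv.symm s
  obtain ⟨a, b, c, hab, hbc, hs⟩ : ∃ a b c : Fin 4, a < b ∧ b < c ∧
      ιMulti_family R 3 ![e₀, e₁, e₂, e₃] s =
        ι R (![e₀, e₁, e₂, e₃] a) * (ι R (![e₀, e₁, e₂, e₃] b) * ι R (![e₀, e₁, e₂, e₃] c)) :=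
    ⟨g 0, g 1, g 2, g.strictMono (by decide), g.strictMono (by decide), by
      simp only [ιMulti_family, ιMulti_apply, List.ofFn_succ, List.ofFn_zero, List.prod_cons,
        List.prod_nil, mul_one]
      rfl⟩
  rw [SetLike.mem_coe, hs]
  rcases hsorted a b c hab hbc with
    ⟨rfl, rfl, rfl⟩ | ⟨rfl, rfl, rfl⟩ | ⟨rfl, rfl, rfl⟩ | ⟨rfl, rfl, rfl⟩
  · exact (ι_commute_ι_mul_ι (R := R) e₀ e₁ e₂).eq ▸ h₁₂ e₀
  · exact (ι_commute_ι_mul_ι (R := R) e₀ e₁ e₃).eq ▸ h₁₃ e₀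
  · exact (ι_commute_ι_mul_ι (R := R) e₀ e₂ e₃).eq ▸ h₂₃ e₀
  · exact mul_assoc (ι R e₁) _ _ ▸ h₁₂ e₃

end ExteriorAlgebra

theorem exists_span_finCons_eq_top {K V : Type*} [DivisionRing K] [AddCommGroup V] [Module K V]
    {n : ℕ} {v : Fin n → V} (hv : LinearIndependent K v) (hn : Module.finrank K V = n + 1) :
    ∃ w, Submodule.span K (Set.range (Fin.cons w v : Fin (n + 1) → V)) = ⊤ := by
  have : FiniteDimensional K V := Module.finite_of_finrank_eq_succ hn
  have hv_span : Submodule.span K (Set.range v) ≠ ⊤ := by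
    intro h
    have := finrank_span_eq_card hv
    rw [h, finrank_top, hn, Fintype.card_fin] at this
    omega
  obtain ⟨w, -, hw⟩ := SetLike.exists_of_lt (lt_top_iff_ne_top.2 hv_span)
  exact ⟨w, (linearIndependent_finCons.2 ⟨hv, hw⟩).span_eq_top_of_card_eq_finrank
    (by simp [hn])⟩

section Wb12

variable (e₁ e₂ e₃ : V)

theorem mk_mem_range_Wb12 {X₁ X₂ X₃ : ExteriorAlgebra ℝ V} (h₁ : X₁ ∈ ⋀[ℝ]^2 V)
    (h₂ : X₂ ∈ ⋀[ℝ]^2 V) (h₃ : X₃ ∈ ⋀[ℝ]^2 V) :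
    (ι ℝ e₁ * X₂ - ι ℝ e₂ * X₁, ι ℝ e₁ * X₃ - ι ℝ e₃ * X₁, ι ℝ e₂ * X₃ - ι ℝ e₃ * X₂) ∈
      LinearMap.range (Wb12 e₁ e₂ e₃) :=
  ⟨(⟨X₁, h₁⟩, ⟨X₂, h₂⟩, ⟨X₃, h₃⟩), rfl⟩

theorem range_Wb12_le : LinearMap.range (Wb12 e₁ e₂ e₃) ≤
    (⋀[ℝ]^3 V).prod ((⋀[ℝ]^3 V).prod (⋀[ℝ]^3 V)) := by
  rintro _ ⟨⟨⟨X₁, h₁⟩, ⟨X₂, h₂⟩, ⟨X₃, h₃⟩⟩, rfl⟩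
  exact ⟨sub_mem (ι_mul_mem_exteriorPower e₁ h₂) (ι_mul_mem_exteriorPower e₂ h₁),
    sub_mem (ι_mul_mem_exteriorPower e₁ h₃) (ι_mul_mem_exteriorPower e₃ h₁),
    sub_mem (ι_mul_mem_exteriorPower e₂ h₃) (ι_mul_mem_exteriorPower e₃ h₂)⟩

theorem smul_mem_range_Wb12 (c₁ c₂ c₃ : ℝ) (w : V) :
    ((c₁ + c₂) • (ι ℝ e₁ * ι ℝ e₂ * ι ℝ w), (c₁ + c₃) • (ι ℝ e₁ * ι ℝ e₃ * ι ℝ w),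
      (c₂ + c₃) • (ι ℝ e₂ * ι ℝ e₃ * ι ℝ w)) ∈ LinearMap.range (Wb12 e₁ e₂ e₃) := by
  have mem (c : ℝ) (x : V) : c • (ι ℝ x * ι ℝ w) ∈ ⋀[ℝ]^2 V :=
    Submodule.smul_mem _ c (ι_mul_ι_mem_exteriorPower_two x w)
  convert mk_mem_range_Wb12 e₁ e₂ e₃ (mem c₁ e₁) (mem c₂ e₂) (mem c₃ e₃) using 3 <;>
    simp only [mul_smul_comm, ← mul_assoc, ι_mul_ι_anticomm e₂ e₁, ι_mul_ι_anticomm e₃ e₁,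
      ι_mul_ι_anticomm e₃ e₂, neg_mul] <;> module

variable {e₀ : V} (hspan : Submodule.span ℝ (Set.range ![e₀, e₁, e₂, e₃]) = ⊤)
include hspan

theorem mk_zero_zero_mem_range_Wb12 {a : ExteriorAlgebra ℝ V} (ha : a ∈ ⋀[ℝ]^3 V) :
    (a, 0, 0) ∈ LinearMap.range (Wb12 e₁ e₂ e₃) := by
  refine exteriorPower_three_le_of_forall_mem hspan
    (S := (LinearMap.range (Wb12 e₁ e₂ e₃)).comap (LinearMap.inl ℝ _ _)) ?_ ?_ ?_ ha <;>
    intro w <;> rw [Submodule.mem_comap, LinearMap.inl_apply, ← Prod.mk_zero_zero]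
  · simpa only [add_halves, add_neg_cancel, one_smul, zero_smul] using
      smul_mem_range_Wb12 e₁ e₂ e₃ (1 / 2) (1 / 2) (-(1 / 2)) w
  · convert mk_mem_range_Wb12 e₁ e₂ e₃ (zero_mem _) (ι_mul_ι_mem_exteriorPower_two e₃ w)
      (zero_mem _) using 1
    simp [← mul_assoc]
  · convert mk_mem_range_Wb12 e₁ e₂ e₃ (neg_mem (ι_mul_ι_mem_exteriorPower_two e₃ w))
      (zero_mem _) (zero_mem _) using 1
    simp [← mul_assoc]

theorem zero_mk_zero_mem_range_Wb12 {b : ExteriorAlgebra ℝ V} (hb : b ∈ ⋀[ℝ]^3 V) :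
    (0, b, 0) ∈ LinearMap.range (Wb12 e₁ e₂ e₃) := by
  refine exteriorPower_three_le_of_forall_mem hspan
    (S := (LinearMap.range (Wb12 e₁ e₂ e₃)).comap
      ((LinearMap.inr ℝ _ _).comp (LinearMap.inl ℝ _ _))) ?_ ?_ ?_ hb <;>
    intro w <;> rw [Submodule.mem_comap, LinearMap.comp_apply, LinearMap.inl_apply,
      LinearMap.inr_apply]
  · convert mk_mem_range_Wb12 e₁ e₂ e₃ (zero_mem _) (zero_mem _)
      (ι_mul_ι_mem_exteriorPower_two e₂ w) using 1
    simp [← mul_assoc]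
  · simpa only [add_halves, add_neg_cancel, neg_add_cancel, one_smul, zero_smul] using
      smul_mem_range_Wb12 e₁ e₂ e₃ (1 / 2) (-(1 / 2)) (1 / 2) w
  · convert mk_mem_range_Wb12 e₁ e₂ e₃ (ι_mul_ι_mem_exteriorPower_two e₂ w)
      (zero_mem _) (zero_mem _) using 1
    simp [← mul_assoc, ι_mul_ι_anticomm e₃ e₂]

theorem zero_zero_mk_mem_range_Wb12 {c : ExteriorAlgebra ℝ V} (hc : c ∈ ⋀[ℝ]^3 V) :
    (0, 0, c) ∈ LinearMap.range (Wb12 e₁ e₂ e₃) := by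
  refine exteriorPower_three_le_of_forall_mem hspan
    (S := (LinearMap.range (Wb12 e₁ e₂ e₃)).comap
      ((LinearMap.inr ℝ _ _).comp (LinearMap.inr ℝ _ _))) ?_ ?_ ?_ hc <;>
    intro w <;> rw [Submodule.mem_comap, LinearMap.comp_apply, LinearMap.inr_apply,
      LinearMap.inr_apply]
  · convert mk_mem_range_Wb12 e₁ e₂ e₃ (zero_mem _) (zero_mem _)
      (neg_mem (ι_mul_ι_mem_exteriorPower_two e₁ w)) using 1
    simp [← mul_assoc, ι_mul_ι_anticomm e₂ e₁]
  · convert mk_mem_range_Wb12 e₁ e₂ e₃ (zero_mem _) (ι_mul_ι_mem_exteriorPower_two e₁ w)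
      (zero_mem _) using 1
    simp [← mul_assoc, ι_mul_ι_anticomm e₃ e₁]
  · simpa only [neg_add_cancel, add_halves, one_smul, zero_smul] using
      smul_mem_range_Wb12 e₁ e₂ e₃ (-(1 / 2)) (1 / 2) (1 / 2) w

end Wb12

theorem Wb12_surjective_general
    (hdim : Module.finrank ℝ V = 4) (e₁ e₂ e₃ : V)
    (hind : LinearIndependent ℝ ![e₁, e₂, e₃]) :
    LinearMap.range (Wb12 e₁ e₂ e₃) = (⋀[ℝ]^3 V).prod ((⋀[ℝ]^3 V).prod (⋀[ℝ]^3 V)) := by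
  obtain ⟨e₀, hspan⟩ := exists_span_finCons_eq_top hind hdim
  refine le_antisymm (range_Wb12_le e₁ e₂ e₃) ?_
  rintro ⟨a, b, c⟩ ⟨ha, hb, hc⟩
  simpa using add_mem (add_mem (mk_zero_zero_mem_range_Wb12 e₁ e₂ e₃ hspan ha)
    (zero_mk_zero_mem_range_Wb12 e₁ e₂ e₃ hspan hb))
    (zero_zero_mk_mem_range_Wb12 e₁ e₂ e₃ hspan hc)

/-- For `V` 4-dimensional and `e₁, e₂, e₃` linearly independent, the map
`(X₁,X₂,X₃) ↦ (e₁∧X₂ − e₂∧X₁, e₁∧X₃ − e₃∧X₁, e₂∧X₃ − e₃∧X₂)` from `(⋀²V)³` is surjective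
onto `(⋀³V)³`. -/
theorem Wb12_surjective [FiniteDimensional ℝ V]
    (hdim : Module.finrank ℝ V = 4) (e₁ e₂ e₃ : V)
    (hind : LinearIndependent ℝ ![e₁, e₂, e₃]) :
    LinearMap.range (Wb12 e₁ e₂ e₃) = (⋀[ℝ]^3 V).prod ((⋀[ℝ]^3 V).prod (⋀[ℝ]^3 V)) :=
  Wb12_surjective_general hdim e₁ e₂ e₃ hind
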